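/- Let L be a subdirectly irreducible pk-algebra satisfying a* ≤ C(b) ∨ T(a)* for all a, b ∈ L. Then every prime filter of L that is not maximal is contained in every maximal prime filter of L. -/

import Mathlib

/-- A pseudocomplemented De Morgan algebra (pm-algebra): a bounded distributive
lattice with a De Morgan involution `dm` and a pseudocomplement `pc`. -/
class PMAlgebra (L : Type*) extends DistribLattice L, BoundedOrder L where
  dm : L → L
  pc : L → L
  dm_dm : ∀ a : L, dm (dm a) = a
  dm_inf : ∀ a b : L, dm (a ⊓ b) = dm a ⊔ dm b
  pc_iff : ∀ a b : L, a ⊓ b = ⊥ ↔ b ≤ pc a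

namespace PMAlgebra

variable {L : Type*} [PMAlgebra L]

/-- A congruence of a pm-algebra. -/
def IsCongruence (θ : L → L → Prop) : Prop :=
  Equivalence θ ∧
  (∀ a b c d : L, θ a b → θ c d → θ (a ⊓ c) (b ⊓ d)) ∧
  (∀ a b c d : L, θ a b → θ c d → θ (a ⊔ c) (b ⊔ d)) ∧
  (∀ a b : L, θ a b → θ (dm a) (dm b)) ∧
  (∀ a b : L, θ a b → θ (pc a) (pc b))

/-- `L` is simple: it has more than one element and its only congruences are
equality and the total relation. -/
def Simple (L : Type*) [PMAlgebra L] : Prop :=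
  Nontrivial L ∧ ∀ θ : L → L → Prop, IsCongruence θ →
    θ = (fun a b => a = b) ∨ θ = (fun _ _ => True)

/-- `L` is subdirectly irreducible: there is a congruence `μ ≠ Eq` contained in
every congruence different from equality. -/
def SubdirectlyIrreducible (L : Type*) [PMAlgebra L] : Prop :=
  ∃ μ : L → L → Prop, IsCongruence μ ∧ μ ≠ (fun a b => a = b) ∧
    ∀ θ : L → L → Prop, IsCongruence θ → θ ≠ (fun a b => a = b) →
      ∀ a b : L, μ a b → θ a b

/-- A prime filter of the underlying lattice of `L`. -/
def IsPrimeFilter (P : Set L) : Prop :=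
  P.Nonempty ∧ P ≠ Set.univ ∧
  (∀ a b : L, a ∈ P → a ≤ b → b ∈ P) ∧
  (∀ a b : L, a ∈ P → b ∈ P → a ⊓ b ∈ P) ∧
  (∀ a b : L, a ⊔ b ∈ P → a ∈ P ∨ b ∈ P)

/-- The Birula–Rasiowa transformation. -/
def phi (P : Set L) : Set L := {a : L | dm a ∉ P}

/-- `P` is a maximal prime filter. -/
def IsMaximalPF (P : Set L) : Prop :=
  IsPrimeFilter P ∧ ∀ Q : Set L, IsPrimeFilter Q → P ⊆ Q → Q = P

/-- `P` is a minimal prime filter. -/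
def IsMinimalPF (P : Set L) : Prop :=
  IsPrimeFilter P ∧ ∀ Q : Set L, IsPrimeFilter Q → Q ⊆ P → Q = P

/-- The body of `L`: prime filters that are neither maximal nor minimal. -/
def body (L : Type*) [PMAlgebra L] : Set (Set L) :=
  {P : Set L | IsPrimeFilter P ∧ ¬ IsMaximalPF P ∧ ¬ IsMinimalPF P}

/-- The prime filter space of `L` is φ-connected. -/
def PhiConnected (L : Type*) [PMAlgebra L] : Prop :=
  ∀ S : Set (Set L), S ⊆ {P : Set L | IsPrimeFilter P} → S.Nonempty →
    (∀ P Q : Set L, P ∈ S → IsPrimeFilter Q → P ⊆ Q → Q ∈ S) →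
    (∀ P Q : Set L, P ∈ S → IsPrimeFilter Q → Q ⊆ P → Q ∈ S) →
    (∀ P : Set L, P ∈ S → phi P ∈ S) →
    S = {P : Set L | IsPrimeFilter P}

/-- The Kleene identity. -/
def Kleene (L : Type*) [PMAlgebra L] : Prop :=
  ∀ a b : L, a ⊓ dm a ≤ b ⊔ dm b

/-- The term `C(x) = (x ∧ x') ∨ (x ∧ x')*`. -/
def C (x : L) : L := (x ⊓ dm x) ⊔ pc (x ⊓ dm x)

/-- The term `T(x) = C(x) ∧ C(x)'`. -/
def T (x : L) : L := C x ⊓ dm (C x)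

end PMAlgebra


/-!
Every maximal prime filter contains all dense elements (`y* = 0`) and all `C(b)`. Subdirect
irreducibility forces every `u` with `u ∧ u' = 0` to be `0` or `1`; with the identity this gives
`T(x)* = 0` for all `x ≠ 0, 1`, because `T(x)* ∧ T(x)*'` lies in no maximal prime filter.
If `a ∈ P \ Q` with `Q` maximal, then `a* ≠ 0`, so the identity at `a*` yields
`a ≤ a** ≤ C(b)` for every `b`. A prime filter containing every `C(b)` contains every dense
element: otherwise comparing `P` with its Birula–Rasiowa image `φ(P)` (the Kleene law makes
them comparable) leads to a contradiction. Since `z ∨ z*` is dense, `P` is then maximal.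
-/

open Order OrderDual

namespace PMAlgebra

variable {L : Type*} [PMAlgebra L]

theorem dm_antitone : Antitone (dm : L → L) := fun a b hab => by
  have h := dm_inf a b
  rw [inf_eq_left.mpr hab] at h
  rw [h]
  exact le_sup_right

theorem dm_sup (a b : L) : dm (a ⊔ b) = dm a ⊓ dm b := by
  conv_lhs => rw [← dm_dm a, ← dm_dm b, ← dm_inf, dm_dm]

theorem dm_bot : dm (⊥ : L) = ⊤ :=
  top_le_iff.mp (dm_dm (⊤ : L) ▸ dm_antitone bot_le)

theorem dm_top : dm (⊤ : L) = ⊥ := by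
  rw [← dm_bot, dm_dm]

theorem inf_dm_le_dm_inf_dm (a : L) : a ⊓ dm a ≤ dm (a ⊓ dm a) := by
  rw [dm_inf, dm_dm]
  exact inf_le_left.trans le_sup_right

theorem inf_pc_self (a : L) : a ⊓ pc a = ⊥ :=
  (pc_iff a (pc a)).mpr le_rfl

theorem le_pc_of_inf_eq_bot {a b : L} (h : a ⊓ b = ⊥) : b ≤ pc a :=
  (pc_iff a b).mp h

theorem pc_antitone : Antitone (pc : L → L) := fun _ b hab =>
  le_pc_of_inf_eq_bot (le_bot_iff.mp ((inf_le_inf_right _ hab).trans (inf_pc_self b).le))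

theorem le_pc_pc (a : L) : a ≤ pc (pc a) :=
  le_pc_of_inf_eq_bot (by rw [inf_comm, inf_pc_self])

theorem pc_bot : pc (⊥ : L) = ⊤ :=
  top_le_iff.mp (le_pc_of_inf_eq_bot (bot_inf_eq _))

theorem pc_sup (a b : L) : pc (a ⊔ b) = pc a ⊓ pc b := by
  refine le_antisymm (le_inf (pc_antitone le_sup_left) (pc_antitone le_sup_right))
    (le_pc_of_inf_eq_bot (le_bot_iff.mp ?_))
  rw [inf_sup_right]
  exact sup_le ((inf_le_inf_left a inf_le_left).trans (inf_pc_self a).le)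
    ((inf_le_inf_left b inf_le_right).trans (inf_pc_self b).le)

theorem pc_sup_pc_self (a : L) : pc (a ⊔ pc a) = ⊥ := by
  rw [pc_sup, inf_pc_self]

theorem pc_inf_inf_right (a u : L) : pc (a ⊓ u) ⊓ u = pc a ⊓ u := by
  refine le_antisymm (le_inf ?_ inf_le_right)
    (inf_le_inf_right u (pc_antitone inf_le_left))
  refine le_pc_of_inf_eq_bot ?_
  calc a ⊓ (pc (a ⊓ u) ⊓ u) = a ⊓ u ⊓ pc (a ⊓ u) := by ac_rfl
    _ = ⊥ := inf_pc_self _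

theorem C_inf_dm_self (x : L) : C (x ⊓ dm x) = C x := by
  rw [C, C, inf_eq_left.mpr (inf_dm_le_dm_inf_dm x)]

theorem T_inf_dm_self (x : L) : T (x ⊓ dm x) = T x := by
  rw [T, T, C_inf_dm_self]

namespace IsPrimeFilter

variable {P : Set L}

theorem mem_of_le (hP : IsPrimeFilter P) {a b : L} (ha : a ∈ P) (hab : a ≤ b) : b ∈ P :=
  hP.2.2.1 a b ha hab

theorem inf_mem (hP : IsPrimeFilter P) {a b : L} (ha : a ∈ P) (hb : b ∈ P) : a ⊓ b ∈ P :=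
  hP.2.2.2.1 a b ha hb

theorem mem_or_mem (hP : IsPrimeFilter P) {a b : L} (h : a ⊔ b ∈ P) : a ∈ P ∨ b ∈ P :=
  hP.2.2.2.2 a b h

theorem top_mem (hP : IsPrimeFilter P) : (⊤ : L) ∈ P :=
  hP.1.elim fun _ ha => hP.mem_of_le ha le_top

theorem bot_notMem (hP : IsPrimeFilter P) : (⊥ : L) ∉ P := fun h =>
  hP.2.1 (Set.eq_univ_of_forall fun _ => hP.mem_of_le h bot_le)

theorem notMem_of_inf_eq_bot (hP : IsPrimeFilter P) {a b : L} (ha : a ∈ P) (hab : a ⊓ b = ⊥) :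
    b ∉ P := fun hb => hP.bot_notMem (hab ▸ hP.inf_mem ha hb)

theorem isPFilter (hP : IsPrimeFilter P) : IsPFilter P :=
  .of_def hP.1 (fun a ha b hb => ⟨a ⊓ b, hP.inf_mem ha hb, inf_le_left, inf_le_right⟩)
    fun hab ha => hP.mem_of_le ha hab

theorem isProper_toIdeal (hP : IsPrimeFilter P) : hP.isPFilter.toIdeal.IsProper :=
  Ideal.isProper_of_notMem (p := toDual ⊥) hP.bot_notMem

theorem isPrimeFilter_phi (hP : IsPrimeFilter P) : IsPrimeFilter (phi P) := by
  refine ⟨⟨⊤, ?_⟩, fun h => ?_, fun a b ha hab hb => ha (hP.mem_of_le hb (dm_antitone hab)),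
    fun a b ha hb h => ?_, fun a b h => ?_⟩
  · show dm (⊤ : L) ∉ P
    rw [dm_top]
    exact hP.bot_notMem
  · refine Set.eq_univ_iff_forall.mp h ⊥ ?_
    rw [dm_bot]
    exact hP.top_mem
  · rw [dm_inf] at h
    exact (hP.mem_or_mem h).elim ha hb
  · by_contra! hab
    exact h (dm_sup a b ▸ hP.inf_mem (not_not.mp hab.1) (not_not.mp hab.2))

theorem phi_subset_or_subset_phi (hk : Kleene L) (hP : IsPrimeFilter P) :
    phi P ⊆ P ∨ P ⊆ phi P := by
  by_contra! h
  obtain ⟨x, hxφ, hxP⟩ := Set.not_subset.mp h.1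
  obtain ⟨y, hyP, hyφ⟩ := Set.not_subset.mp h.2
  have hy : y ⊓ dm y ∈ P := hP.inf_mem hyP (not_not.mp hyφ)
  exact (hP.mem_or_mem (hP.mem_of_le hy (hk y x))).elim hxP hxφ

end IsPrimeFilter

-- Prime filters of `L` are the prime ideals of `Lᵒᵈ`; this brings in Mathlib's maximal ideals.
theorem isPrimeFilter_of_isPrime (J : Ideal Lᵒᵈ) [hJ : J.IsPrime] :
    IsPrimeFilter (toDual ⁻¹' (J : Set Lᵒᵈ)) :=
  ⟨J.nonempty.preimage toDual.surjective, fun h => hJ.toIsProper.top_notMem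
      (Set.eq_univ_iff_forall.mp h ⊥), fun _ _ ha hab => J.lower (toDual_le_toDual.mpr hab) ha,
    fun _ _ => Ideal.sup_mem, fun _ _ => hJ.mem_or_mem⟩

theorem exists_isMaximalPF_superset (I : Ideal Lᵒᵈ) [I.IsProper] :
    ∃ M : Set L, IsMaximalPF M ∧ toDual ⁻¹' (I : Set Lᵒᵈ) ⊆ M := by
  obtain ⟨J, hIJ, hJ⟩ := Ideal.IsProper.exists_le_maximal ‹I.IsProper›
  refine ⟨_, ⟨isPrimeFilter_of_isPrime J, fun Q hQ hJQ => ?_⟩, fun _ hx => hIJ hx⟩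
  have hJK : J ≤ hQ.isPFilter.toIdeal := fun x hx => hJQ hx
  have hK := hQ.isProper_toIdeal
  obtain hJK | hJK := eq_or_lt_of_le hJK
  · rw [hJK]
    rfl
  · exact absurd (hJ.maximal_proper hJK) hK.ne_univ

theorem IsPrimeFilter.exists_isMaximalPF_superset {P : Set L} (hP : IsPrimeFilter P) :
    ∃ M : Set L, IsMaximalPF M ∧ P ⊆ M :=
  have := hP.isProper_toIdeal
  PMAlgebra.exists_isMaximalPF_superset hP.isPFilter.toIdeal

theorem exists_isMaximalPF_mem {w : L} (hw : w ≠ ⊥) :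
    ∃ M : Set L, IsMaximalPF M ∧ w ∈ M :=
  have : (Ideal.principal (toDual w)).IsProper := Ideal.isProper_principal_iff.mpr hw
  (exists_isMaximalPF_superset _).imp fun _ h => ⟨h.1, h.2 Ideal.mem_principal_self⟩

namespace IsMaximalPF

variable {Q : Set L}

theorem pc_mem_of_notMem (hQ : IsMaximalPF Q) {a : L} (ha : a ∉ Q) : pc a ∈ Q := by
  set I := hQ.1.isPFilter.toIdeal
  set K := I ⊔ Ideal.principal (toDual a)
  have hbot : toDual (⊥ : L) ∈ K := by
    by_contra h
    have := Ideal.isProper_of_notMem h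
    obtain ⟨M, hM, hKM⟩ := exists_isMaximalPF_superset K
    have hMQ : M = Q := hQ.2 M hM.1 fun q hq => hKM ((le_sup_left : I ≤ K) hq)
    exact ha (hMQ ▸ hKM ((le_sup_right : _ ≤ K) Ideal.mem_principal_self))
  obtain ⟨q, hq, j, hj, hqj⟩ := Ideal.mem_sup.mp hbot
  have hqa : ofDual q ⊓ a = ⊥ := le_bot_iff.mp ((inf_le_inf_left _ hj).trans hqj)
  exact hQ.1.mem_of_le (a := ofDual q) hq (le_pc_of_inf_eq_bot (by rw [inf_comm, hqa]))

theorem mem_of_pc_eq_bot (hQ : IsMaximalPF Q) {a : L} (ha : pc a = ⊥) : a ∈ Q :=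
  not_not.mp fun h => hQ.1.bot_notMem (ha ▸ hQ.pc_mem_of_notMem h)

theorem C_mem (hQ : IsMaximalPF Q) (b : L) : C b ∈ Q := by
  by_cases h : b ⊓ dm b ∈ Q
  · exact hQ.1.mem_of_le h le_sup_left
  · exact hQ.1.mem_of_le (hQ.pc_mem_of_notMem h) le_sup_right

theorem mem_or_dm_mem (hk : Kleene L) (hQ : IsMaximalPF Q) (a : L) : a ∈ Q ∨ dm a ∈ Q := by
  have hφ : phi Q ⊆ Q := (hQ.1.phi_subset_or_subset_phi hk).elim id
    fun h => (hQ.2 _ hQ.1.isPrimeFilter_phi h).le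
  exact or_iff_not_imp_right.mpr fun h => hφ h

theorem dm_C_mem (hk : Kleene L) (hQ : IsMaximalPF Q) {b : L} (hb : b ⊓ dm b ∈ Q) :
    dm (C b) ∈ Q := by
  rw [C, dm_sup]
  exact hQ.1.inf_mem (hQ.1.mem_of_le hb (inf_dm_le_dm_inf_dm b))
    ((hQ.mem_or_dm_mem hk _).resolve_left (hQ.1.notMem_of_inf_eq_bot hb (inf_pc_self _)))

end IsMaximalPF

theorem isCongruence_inf_right {u : L} (hu : u ⊓ dm u = ⊥) :
    IsCongruence (fun a b : L => a ⊓ u = b ⊓ u) := by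
  have dm_inf_right (p : L) : dm (p ⊓ u) ⊓ u = dm p ⊓ u := by
    rw [dm_inf, inf_sup_right, inf_comm (dm u), hu, sup_bot_eq]
  refine ⟨⟨fun _ => rfl, Eq.symm, Eq.trans⟩, fun a b c d h1 h2 => ?_, fun a b c d h1 h2 => ?_,
    fun a b h => ?_, fun a b h => ?_⟩ <;> beta_reduce at *
  · rw [inf_inf_distrib_right, h1, h2, ← inf_inf_distrib_right]
  · rw [inf_sup_right, inf_sup_right, h1, h2]
  · rw [← dm_inf_right a, h, dm_inf_right]
  · rw [← pc_inf_inf_right a, h, pc_inf_inf_right]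

theorem ne_eq_of_rel_of_ne {α : Type*} {θ : α → α → Prop} {a b : α} (h : θ a b)
    (hab : a ≠ b) : θ ≠ (fun a b => a = b) := by
  rintro rfl
  exact hab h

theorem SubdirectlyIrreducible.eq_bot_or_eq_top (hsi : SubdirectlyIrreducible L) {u : L}
    (hu : u ⊓ dm u = ⊥) : u = ⊥ ∨ u = ⊤ := by
  by_contra! hu01
  obtain ⟨μ, hμ, hμ_ne, hμ_le⟩ := hsi
  obtain ⟨a, b, hab, hne⟩ : ∃ a b, μ a b ∧ a ≠ b := by
    by_contra! h
    exact hμ_ne (funext₂ fun a b => propext ⟨h a b, fun e => e ▸ hμ.1.refl a⟩)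
  have hu' : dm u ⊓ dm (dm u) = ⊥ := by rw [dm_dm, inf_comm, hu]
  have hsup : u ⊔ dm u = ⊤ := by rw [sup_comm, ← dm_dm u, ← dm_inf, dm_dm, hu, dm_bot]
  have hdu : dm u ≠ ⊥ := fun h => hu01.2 (by rw [← dm_dm u, h, dm_bot])
  have h1 : a ⊓ u = b ⊓ u := hμ_le _ (isCongruence_inf_right hu)
    (ne_eq_of_rel_of_ne (a := dm u) (b := ⊥) (by rw [inf_comm, hu, bot_inf_eq]) hdu) a b hab
  have h2 : a ⊓ dm u = b ⊓ dm u := hμ_le _ (isCongruence_inf_right hu')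
    (ne_eq_of_rel_of_ne (a := u) (b := ⊥) (by rw [hu, bot_inf_eq]) hu01.1) a b hab
  apply hne
  calc a = a ⊓ u ⊔ a ⊓ dm u := by rw [← inf_sup_left, hsup, inf_top_eq]
    _ = b ⊓ u ⊔ b ⊓ dm u := by rw [h1, h2]
    _ = b := by rw [← inf_sup_left, hsup, inf_top_eq]

theorem inf_dm_eq_bot_of_C_eq_top (hk : Kleene L) {x : L} (hx : C x = ⊤) : x ⊓ dm x = ⊥ := by
  by_contra h
  obtain ⟨M, hM, hxM⟩ := exists_isMaximalPF_mem h
  have := hM.dm_C_mem hk hxM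
  rw [hx, dm_top] at this
  exact hM.1.bot_notMem this

theorem pc_T_inf_dm_eq_bot (hk : Kleene L) (hid : ∀ a b : L, pc a ≤ C b ⊔ pc (T a)) (x : L) :
    pc (T x) ⊓ dm (pc (T x)) = ⊥ := by
  set w := pc (T x)
  by_contra h
  obtain ⟨M, hM, hwM⟩ := exists_isMaximalPF_mem h
  have hw : w ∉ phi M := fun h => h (hM.1.mem_of_le hwM inf_le_right)
  have hTx : T x ∉ M := hM.1.notMem_of_inf_eq_bot (hM.1.mem_of_le hwM inf_le_left)
    (by rw [inf_comm, inf_pc_self])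
  have hCx : C x ∈ phi M := fun h => hTx (hM.1.inf_mem (hM.C_mem x) h)
  have hφ := hM.1.isPrimeFilter_phi
  rcases hφ.mem_or_mem hCx with hd | hpd
  · apply hd
    rw [dm_inf, dm_dm, sup_comm]
    exact (hM.mem_or_dm_mem hk x).elim (hM.1.mem_of_le · le_sup_left)
      (hM.1.mem_of_le · le_sup_right)
  · have hCw : C w ⊔ w ∈ phi M := hφ.mem_of_le hpd
      (by simpa only [T_inf_dm_self] using hid (x ⊓ dm x) w)
    exact (hφ.mem_or_mem hCw).elim (fun h => h (hM.dm_C_mem hk hwM)) hw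

theorem pc_T_eq_bot (hk : Kleene L) (hsi : SubdirectlyIrreducible L)
    (hid : ∀ a b : L, pc a ≤ C b ⊔ pc (T a)) {x : L} (hx0 : x ≠ ⊥) (hx1 : x ≠ ⊤) :
    pc (T x) = ⊥ := by
  refine (hsi.eq_bot_or_eq_top (pc_T_inf_dm_eq_bot hk hid x)).resolve_right fun hw => ?_
  have hT : T x = ⊥ := by simpa only [hw, inf_top_eq] using inf_pc_self (T x)
  rcases hsi.eq_bot_or_eq_top hT with hC | hC
  · have hd : x ⊓ dm x = ⊥ := le_bot_iff.mp (hC ▸ le_sup_left)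
    have hpd : pc (x ⊓ dm x) = ⊥ := le_bot_iff.mp (hC ▸ le_sup_right)
    rw [hd, pc_bot] at hpd
    exact hx0 (le_bot_iff.mp (hpd ▸ le_top))
  · exact (hsi.eq_bot_or_eq_top (inf_dm_eq_bot_of_C_eq_top hk hC)).elim hx0 hx1

theorem le_C_of_pc_ne_bot (hk : Kleene L) (hsi : SubdirectlyIrreducible L)
    (hid : ∀ a b : L, pc a ≤ C b ⊔ pc (T a)) {a : L} (ha0 : a ≠ ⊥) (ha : pc a ≠ ⊥)
    (b : L) : a ≤ C b := by
  have ha1 : pc a ≠ ⊤ := fun h => ha0 (by simpa only [h, inf_top_eq] using inf_pc_self a)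
  calc a ≤ pc (pc a) := le_pc_pc a
    _ ≤ C b ⊔ pc (T (pc a)) := hid (pc a) b
    _ = C b := by rw [pc_T_eq_bot hk hsi hid ha ha1, sup_bot_eq]

namespace IsPrimeFilter

variable {P : Set L}

theorem mem_of_pc_eq_bot_of_forall_C_mem (hk : Kleene L) (hsi : SubdirectlyIrreducible L)
    (hid : ∀ a b : L, pc a ≤ C b ⊔ pc (T a)) (hP : IsPrimeFilter P) (hC : ∀ b, C b ∈ P)
    {y : L} (hy : pc y = ⊥) : y ∈ P := by
  by_contra hyP
  have hy1 : y ≠ ⊤ := fun h => hyP (h ▸ hP.top_mem)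
  have hy0 : y ≠ ⊥ := fun h => hP.bot_notMem (by rw [← hy, h, pc_bot]; exact hP.top_mem)
  set d := y ⊓ dm y
  have hpd : pc d ∈ P :=
    (hP.mem_or_mem (hC y)).resolve_left fun h => hyP (hP.mem_of_le h inf_le_left)
  obtain ⟨M, hM, hPM⟩ := hP.exists_isMaximalPF_superset
  have hdm_pd : dm (pc d) ∈ M :=
    hM.1.mem_of_le (hM.mem_of_pc_eq_bot (pc_T_eq_bot hk hsi hid hy0 hy1))
      (inf_le_right.trans (dm_antitone le_sup_right))
  have hwM : pc d ⊓ dm (pc d) ∈ M := hM.1.inf_mem (hPM hpd) hdm_pd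
  have hwP : pc d ⊓ dm (pc d) ∈ P := (hP.mem_or_mem (hC (pc d))).resolve_right
    fun h => hM.1.notMem_of_inf_eq_bot hwM (inf_pc_self _) (hPM h)
  rcases hP.phi_subset_or_subset_phi hk with hφ | hφ
  · refine hyP (hφ fun hdy => ?_)
    exact hM.1.notMem_of_inf_eq_bot (hM.1.inf_mem (hM.mem_of_pc_eq_bot hy) (hPM hdy))
      (inf_pc_self d) (hPM hpd)
  · exact hφ hpd (hP.mem_of_le hwP inf_le_right)

theorem isMaximalPF_of_forall_pc_eq_bot_mem (hP : IsPrimeFilter P)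
    (h : ∀ y, pc y = ⊥ → y ∈ P) : IsMaximalPF P := by
  refine ⟨hP, fun G hG hPG => Set.Subset.antisymm (fun v hv => ?_) hPG⟩
  exact (hP.mem_or_mem (h _ (pc_sup_pc_self v))).resolve_right
    fun hpv => hG.notMem_of_inf_eq_bot hv (inf_pc_self v) (hPG hpv)

end IsPrimeFilter

end PMAlgebra

open PMAlgebra

/-- In a subdirectly irreducible pk-algebra satisfying `a* ≤ C(b) ∨ T(a)*`,
every non-maximal prime filter is contained in every maximal prime filter. -/
theorem nonmax_subset_max {L : Type*} [PMAlgebra L]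
    (hk : Kleene L) (hsi : SubdirectlyIrreducible L)
    (hid : ∀ a b : L, pc a ≤ C b ⊔ pc (T a)) :
    ∀ P Q : Set L, IsPrimeFilter P → ¬ IsMaximalPF P → IsMaximalPF Q → P ⊆ Q := by
  intro P Q hP hP_nonmax hQ a haP
  by_contra haQ
  have ha0 : a ≠ ⊥ := fun h => hP.bot_notMem (h ▸ haP)
  have ha : pc a ≠ ⊥ := fun h => haQ (hQ.mem_of_pc_eq_bot h)
  have hC : ∀ b, C b ∈ P := fun b => hP.mem_of_le haP (le_C_of_pc_ne_bot hk hsi hid ha0 ha b)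
  exact hP_nonmax (hP.isMaximalPF_of_forall_pc_eq_bot_mem
    fun _ hy => hP.mem_of_pc_eq_bot_of_forall_C_mem hk hsi hid hC hy)
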